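/- arXiv:1907.11765 — 2 statements merged into one kernel-verified Lean document; each statement's English description precedes it below -/
import Mathlib

section
/- Suppose κ is a singular cardinal with cf(κ) = ρ and 2^ρ ≤ κ. Let ⟨μ_i : i < ρ⟩ be an increasing sequence of cardinals cofinal in κ such that each μ_i carries a μ_i-complete uniform ultrafilter U_i which has an almost-decreasing generating sequence of regular length θ_i. Let ⟨f_α : α < σ⟩ be a scale in ∏_{i<ρ} μ_i with σ regular and κ < σ, and let ⟨g_β : β < τ⟩ be a scale in ∏_{i<ρ} θ_i with τ regular and σ ≤ τ. Then there exists a uniform ultrafilter U on κ such that Ch(U) = τ. -/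
universe u

open Cardinal Set

/-- `A ⊆* B` below the cardinal `κ`: the difference `A \ B` is bounded below `κ`
(where `κ` is identified with its set of ordinals `Set.Iio κ.ord`). -/
def AlmostSub (κ : Cardinal.{u}) (A B : Set Ordinal.{u}) : Prop :=
  ∃ β, β < κ.ord ∧ A \ B ⊆ Set.Iio β

/-- An ultrafilter on the cardinal `κ`, identified with its set of ordinals `Set.Iio κ.ord`. -/
structure UltrafilterOn (κ : Cardinal.{u}) : Type (u + 1) where
  sets : Set (Set Ordinal.{u})
  sets_subset : ∀ A ∈ sets, A ⊆ Set.Iio κ.ord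
  univ_mem : Set.Iio κ.ord ∈ sets
  superset_mem : ∀ A ∈ sets, ∀ B, B ⊆ Set.Iio κ.ord → A ⊆ B → B ∈ sets
  inter_mem : ∀ A ∈ sets, ∀ B ∈ sets, A ∩ B ∈ sets
  empty_not_mem : ∅ ∉ sets
  mem_or_compl_mem : ∀ A, A ⊆ Set.Iio κ.ord → A ∈ sets ∨ Set.Iio κ.ord \ A ∈ sets

namespace UltrafilterOn

variable {κ : Cardinal.{u}}

/-- A uniform ultrafilter: every member has cardinality `κ`. -/
def IsUniform (U : UltrafilterOn κ) : Prop :=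
  ∀ A ∈ U.sets, #A = Cardinal.lift.{u + 1, u} κ

/-- `κ`-completeness: `U` is closed under intersections of fewer than `κ` many of its members. -/
def IsComplete (U : UltrafilterOn κ) : Prop :=
  ∀ S : Set (Set Ordinal.{u}), S.Nonempty → S ⊆ U.sets →
    #S < Cardinal.lift.{u + 1, u} κ → ⋂₀ S ∈ U.sets

/-- Nonprincipal: no singleton is a member. -/
def IsNonprincipal (U : UltrafilterOn κ) : Prop :=
  ∀ β : Ordinal.{u}, {β} ∉ U.sets

/-- A base for `U`: a subfamily `B ⊆ U` such that every member of `U` almost contains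
a member of `B`. -/
def IsBase (U : UltrafilterOn κ) (B : Set (Set Ordinal.{u})) : Prop :=
  B ⊆ U.sets ∧ ∀ X ∈ U.sets, ∃ Y ∈ B, AlmostSub κ Y X

/-- The character of `U`: the least cardinality of a base for `U`. -/
noncomputable def char (U : UltrafilterOn κ) : Cardinal.{u + 1} :=
  sInf {c | ∃ B, U.IsBase B ∧ #B = c}

/-- `⟨A i : i < θord⟩` is an almost-decreasing generating sequence for `U`:
its entries are members of `U`, it is `⊆*`-decreasing, and its range is a base for `U`. -/
def IsADGenSeq (U : UltrafilterOn κ) (θord : Ordinal.{u})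
    (A : Ordinal.{u} → Set Ordinal.{u}) : Prop :=
  (∀ i, i < θord → A i ∈ U.sets) ∧
  (∀ i j, i ≤ j → j < θord → AlmostSub κ (A j) (A i)) ∧
  U.IsBase (A '' Set.Iio θord)

/-- A normal measure on `κ`: a `κ`-complete nonprincipal ultrafilter such that every
function regressive on a member of `U` is constant on a member of `U`. -/
def IsNormalMeasure (U : UltrafilterOn κ) : Prop :=
  U.IsComplete ∧ U.IsNonprincipal ∧
  ∀ f : Ordinal.{u} → Ordinal.{u},
    (∃ X ∈ U.sets, ∀ α ∈ X, f α < α) → ∃ Y ∈ U.sets, ∃ c, ∀ α ∈ Y, f α = c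

end UltrafilterOn

/-- `κ` is a measurable cardinal: it is uncountable and carries a `κ`-complete
nonprincipal ultrafilter. -/
def IsMeasurableCard (κ : Cardinal.{u}) : Prop :=
  ℵ₀ < κ ∧ ∃ U : UltrafilterOn κ, U.IsComplete ∧ U.IsNonprincipal

/-- `f <* g`: eventual (pointwise) domination below `ρord`. -/
def EvDomLt (ρord : Ordinal.{u}) (f g : Ordinal.{u} → Ordinal.{u}) : Prop :=
  ∃ i₀, i₀ < ρord ∧ ∀ i, i₀ ≤ i → i < ρord → f i < g i

/-- Membership in the product `∏_{i < ρord} lam i` (of cardinals `lam i`). -/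
def InProd (ρord : Ordinal.{u}) (lam : Ordinal.{u} → Cardinal.{u})
    (f : Ordinal.{u} → Ordinal.{u}) : Prop :=
  ∀ i, i < ρord → f i < (lam i).ord

/-- `⟨g η : η < ν⟩` is a scale of length `ν` in `∏_{i < ρord} lam i`:
a `<*`-increasing and `<*`-cofinal sequence in the product. -/
def IsScale (ρord : Ordinal.{u}) (lam : Ordinal.{u} → Cardinal.{u}) (ν : Cardinal.{u})
    (g : Ordinal.{u} → Ordinal.{u} → Ordinal.{u}) : Prop :=
  (∀ η, η < ν.ord → InProd ρord lam (g η)) ∧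
  (∀ η₁ η₂, η₁ < η₂ → η₂ < ν.ord → EvDomLt ρord (g η₁) (g η₂)) ∧
  ∀ f, InProd ρord lam f → ∃ η, η < ν.ord ∧ EvDomLt ρord f (g η)

/-- `supBelow μ i = sup_{i' < i} μ i'`. -/
noncomputable def supBelow (μ : Ordinal.{u} → Cardinal.{u}) (i : Ordinal.{u}) : Cardinal.{u} :=
  sSup {c | ∃ i', i' < i ∧ c = μ i'}

/-!
Let `D` be an ultrafilter on `ρ` concentrating on the successors `i + 1` above every `i < ρ`,
and let `U` be the `D`-limit of the `U_i`: `X ∈ U` iff `X ∩ μ_i ∈ U_i` for `D`-almost all `i`.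

Upper bound. For `X ∈ U`, choose `j_i < θ_i` with `A_i(j_i) ⊆* X ∩ μ_i`; some `g_β` eventually
dominates `j`, so `A_i(g_β(i)) \ X` is bounded by some `m_i < μ_i`, and some `f_α` eventually
dominates `m`. Hence `X` contains a set `⋃_{i ∈ S} A_i(g_β(i)) \ f_α(i)` with `S ∈ D`, and there
are only `τ · σ · 2^ρ = τ` of those.

Lower bound. For `Y ∈ U`, let `h_Y(i)` be an index with `Y ∩ μ_i ⊄* A_i(h_Y(i))`. Given fewer
than `τ` sets `Y`, regularity of `τ` gives one `β` with `h_Y <* g_β` for all of them. The set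
`⋃_i A_{i+1}(g_β(i+1)) \ μ_i` is in `U`; if `Y` were almost contained in it, then on a block
`[μ_i, μ_{i+1})` with `Y ∩ μ_{i+1} ∈ U_{i+1}` we would get `Y ∩ μ_{i+1} ⊆* A_{i+1}(g_β(i+1))`.
-/

universe v

section AlmostSub

variable {ν : Cardinal.{u}} {A B C : Set Ordinal.{u}}

theorem AlmostSub.trans (hAB : AlmostSub ν A B) (hBC : AlmostSub ν B C) : AlmostSub ν A C := by
  obtain ⟨β₁, hβ₁, h₁⟩ := hAB
  obtain ⟨β₂, hβ₂, h₂⟩ := hBC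
  refine ⟨max β₁ β₂, max_lt hβ₁ hβ₂, fun x ⟨hxA, hxC⟩ => ?_⟩
  by_cases hxB : x ∈ B
  · exact lt_max_of_lt_right (mem_Iio.1 (h₂ ⟨hxB, hxC⟩))
  · exact lt_max_of_lt_left (mem_Iio.1 (h₁ ⟨hxA, hxB⟩))

theorem AlmostSub.mono_right (h : AlmostSub ν A B) (hBC : B ⊆ C) : AlmostSub ν A C :=
  let ⟨β, hβ, hAB⟩ := h
  ⟨β, hβ, (sdiff_subset_sdiff_right hBC).trans hAB⟩

theorem AlmostSub.of_subset (hν : 0 < ν.ord) (h : A ⊆ B) : AlmostSub ν A B :=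
  ⟨0, hν, by simp [sdiff_eq_empty.2 h]⟩

end AlmostSub

theorem not_subset_Iio_of_mk_eq {ν : Cardinal.{u}} {S : Set Ordinal.{u}}
    (hS : #S = lift.{u + 1} ν) {b : Ordinal.{u}} (hb : b < ν.ord) : ¬ S ⊆ Iio b := fun h => by
  have := mk_le_mk_of_subset h
  rw [hS, mk_Iio_ordinal, lift_le] at this
  exact (lt_ord.1 hb).not_ge this

theorem Set.exists_subset_mk_eq_mk_diff_eq {α : Type*} {W : Set α} (hW : ℵ₀ ≤ #W) :
    ∃ W₁ ⊆ W, #W₁ = #W ∧ #↥(W \ W₁) = #W := by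
  obtain ⟨e⟩ := Cardinal.eq.1 (show #(W ⊕ W) = #W by
    rw [mk_sum, lift_id, add_eq_self hW])
  let half : (W → W ⊕ W) → Set α := fun inj => Subtype.val '' range (e ∘ inj)
  have mk_half : ∀ inj : W → W ⊕ W, inj.Injective → #(half inj) = #W := fun inj hinj => by
    rw [mk_image_eq Subtype.val_injective, mk_range_eq _ (e.injective.comp hinj)]
  refine ⟨half Sum.inl, image_subset_iff.2 fun x _ => x.2, mk_half _ Sum.inl_injective,
    le_antisymm (mk_le_mk_of_subset sdiff_subset) ?_⟩
  rw [← mk_half _ Sum.inr_injective]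
  refine mk_le_mk_of_subset ?_
  rintro _ ⟨_, ⟨a, rfl⟩, rfl⟩
  refine ⟨(e (.inr a)).2, ?_⟩
  rintro ⟨_, ⟨b, hb⟩, hba⟩
  exact Sum.inl_ne_inr (e.injective (Subtype.val_injective (hb ▸ hba)))

theorem Cardinal.IsRegular.exists_forall_lt {τ : Cardinal.{u}} (hτ : τ.IsRegular)
    {ι : Type v} (hι : Cardinal.lift.{u} #ι < Cardinal.lift.{v} τ) {b : ι → Ordinal.{u}}
    (hb : ∀ i, b i < τ.ord) :
    ∃ β < τ.ord, ∀ i, b i < β := by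
  refine ⟨⨆ i, b i + 1, Ordinal.lift_iSup_add_one_lt_of_lt_cof ?_ hb, fun i =>
    (lt_add_one (b i)).trans_le (le_ciSup ⟨τ.ord, ?_⟩ i)⟩
  · rwa [Cardinal.lift_ord, hτ.lift.cof_ord]
  · rintro _ ⟨j, rfl⟩
    exact Order.add_one_le_iff.2 (hb j)

theorem EvDomLt.trans {o : Ordinal.{u}} {f g h : Ordinal.{u} → Ordinal.{u}}
    (hfg : EvDomLt o f g) (hgh : EvDomLt o g h) : EvDomLt o f h := by
  obtain ⟨i₁, hi₁, h₁⟩ := hfg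
  obtain ⟨i₂, hi₂, h₂⟩ := hgh
  exact ⟨max i₁ i₂, max_lt hi₁ hi₂, fun i hi hio =>
    (h₁ i (le_of_max_le_left hi) hio).trans (h₂ i (le_of_max_le_right hi) hio)⟩

namespace UltrafilterOn

section Uniform

variable {ν : Cardinal.{u}} {U : UltrafilterOn ν}

theorem ord_pos (U : UltrafilterOn ν) : 0 < ν.ord := by
  refine pos_iff_ne_zero.2 fun h => U.empty_not_mem ?_
  simpa [h] using U.univ_mem

theorem isBase_sets (U : UltrafilterOn ν) : U.IsBase U.sets :=
  ⟨subset_rfl, fun X hX => ⟨X, hX, .of_subset U.ord_pos subset_rfl⟩⟩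

theorem char_le {B : Set (Set Ordinal.{u})} (hB : U.IsBase B) : U.char ≤ #B :=
  csInf_le' ⟨B, hB, rfl⟩

theorem le_char {c : Cardinal.{u + 1}}
    (h : ∀ B ⊆ U.sets, #B < c → ∃ X ∈ U.sets, ∀ Y ∈ B, ¬ AlmostSub ν Y X) : c ≤ U.char := by
  refine le_csInf ⟨_, _, U.isBase_sets, rfl⟩ ?_
  rintro _ ⟨B, hB, rfl⟩
  by_contra! hBc
  obtain ⟨X, hX, hBX⟩ := h B hB.1 hBc
  obtain ⟨Y, hY, hYX⟩ := hB.2 X hX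
  exact hBX Y hY hYX

theorem IsUniform.diff_Iio_mem (hU : U.IsUniform) {b : Ordinal.{u}} (hb : b < ν.ord) :
    Iio ν.ord \ Iio b ∈ U.sets :=
  (U.mem_or_compl_mem _ fun _ hx => lt_trans hx hb).resolve_left fun h =>
    not_subset_Iio_of_mk_eq (hU _ h) hb subset_rfl

theorem IsUniform.exists_not_almostSub (hν : ℵ₀ ≤ ν) (hU : U.IsUniform) {W : Set Ordinal.{u}}
    (hW : W ∈ U.sets) : ∃ X ∈ U.sets, ¬ AlmostSub ν W X := by
  have hWν := hU W hW
  obtain ⟨W₁, hW₁W, h₁, h₂⟩ := exists_subset_mk_eq_mk_diff_eq (hWν ▸ aleph0_le_lift.2 hν)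
  rcases U.mem_or_compl_mem W₁ (hW₁W.trans (U.sets_subset W hW)) with hW₁ | hW₁
  · exact ⟨W₁, hW₁, fun ⟨b, hb, hsub⟩ => not_subset_Iio_of_mk_eq (h₂.trans hWν) hb hsub⟩
  · refine ⟨_, hW₁, fun ⟨b, hb, hsub⟩ => not_subset_Iio_of_mk_eq (h₁.trans hWν) hb ?_⟩
    exact fun x hx => hsub ⟨hW₁W hx, fun h => h.2 hx⟩

theorem IsADGenSeq.pos {θ : Ordinal.{u}} {A : Ordinal.{u} → Set Ordinal.{u}}
    (hA : U.IsADGenSeq θ A) : 0 < θ := by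
  obtain ⟨_, ⟨j, hj, -⟩, -⟩ := hA.2.2.2 _ U.univ_mem
  exact pos_of_gt hj

theorem IsADGenSeq.exists_not_almostSub (hν : ℵ₀ ≤ ν) (hU : U.IsUniform) {θ : Ordinal.{u}}
    {A : Ordinal.{u} → Set Ordinal.{u}} (hA : U.IsADGenSeq θ A) {Z : Set Ordinal.{u}}
    (hZ : Z ∈ U.sets) : ∃ j < θ, ¬ AlmostSub ν Z (A j) := by
  by_contra! hZA
  obtain ⟨X, hX, hZX⟩ := hU.exists_not_almostSub hν hZ
  obtain ⟨_, ⟨j, hj, rfl⟩, hjX⟩ := hA.2.2.2 X hX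
  exact hZX ((hZA j hj).trans hjX)

end Uniform

section Limit

variable {κ : Cardinal.{u}} {o : Ordinal.{u}} {μ : Ordinal.{u} → Cardinal.{u}}
  (Us : ∀ i, i < o → UltrafilterOn (μ i))

def traceIndices (X : Set Ordinal.{u}) : Set Ordinal.{u} :=
  {i | ∃ h : i < o, X ∩ Iio (μ i).ord ∈ (Us i h).sets}

def limit (D : Ultrafilter Ordinal.{u}) (hDIio : Iio o ∈ D) (hμκ : ∀ i, i < o → μ i ≤ κ) :
    UltrafilterOn κ where
  sets := {X | X ⊆ Iio κ.ord ∧ traceIndices Us X ∈ D}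
  sets_subset _ hX := hX.1
  univ_mem := by
    refine ⟨subset_rfl, Filter.mem_of_superset hDIio fun i hi => ⟨hi, ?_⟩⟩
    rw [inter_eq_right.2 (Iio_subset_Iio (ord_le_ord.2 (hμκ i hi)))]
    exact (Us i hi).univ_mem
  superset_mem A hA B hB hAB := ⟨hB, Filter.mem_of_superset hA.2 fun i ⟨hi, hAi⟩ =>
    ⟨hi, (Us i hi).superset_mem _ hAi _ inter_subset_right (inter_subset_inter_left _ hAB)⟩⟩
  inter_mem A hA B hB := by
    refine ⟨inter_subset_left.trans hA.1, Filter.mem_of_superset (Filter.inter_mem hA.2 hB.2) ?_⟩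
    rintro i ⟨⟨hi, hAi⟩, _, hBi⟩
    refine ⟨hi, ?_⟩
    rw [inter_inter_distrib_right]
    exact (Us i hi).inter_mem _ hAi _ hBi
  empty_not_mem h := by
    have : traceIndices Us ∅ = ∅ :=
      eq_empty_of_forall_notMem fun i ⟨hi, h⟩ => (Us i hi).empty_not_mem (by simpa using h)
    exact Ultrafilter.empty_notMem (this ▸ h.2)
  mem_or_compl_mem A hA := by
    by_cases hAD : traceIndices Us A ∈ D
    · exact .inl ⟨hA, hAD⟩
    refine .inr ⟨sdiff_subset, Filter.mem_of_superset
      (Filter.inter_mem (Ultrafilter.compl_mem_iff_notMem.2 hAD) hDIio) fun i ⟨hAi, hi⟩ => ⟨hi, ?_⟩⟩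
    have hμκ : Iio (μ i).ord ⊆ Iio κ.ord := Iio_subset_Iio (ord_le_ord.2 (hμκ i hi))
    have : (Iio κ.ord \ A) ∩ Iio (μ i).ord = Iio (μ i).ord \ (A ∩ Iio (μ i).ord) := by
      ext x
      constructor
      · rintro ⟨⟨-, hxA⟩, hx⟩
        exact ⟨hx, fun h => hxA h.1⟩
      · rintro ⟨hx, hxA⟩
        exact ⟨⟨hμκ hx, fun h => hxA ⟨h, hx⟩⟩, hx⟩
    rw [this]
    exact ((Us i hi).mem_or_compl_mem _ inter_subset_right).resolve_left fun h => hAi ⟨hi, h⟩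

variable {Us} {D : Ultrafilter Ordinal.{u}} {hDIio : Iio o ∈ D} {hμκ : ∀ i, i < o → μ i ≤ κ}

theorem isUniform_limit (hUs : ∀ i (hi : i < o), (Us i hi).IsUniform)
    (hDμ : ∀ c < κ, {i | c < μ i} ∈ D) : (limit Us D hDIio hμκ).IsUniform := by
  rintro X ⟨hXκ, hXD⟩
  refine (mk_le_mk_of_subset hXκ |>.trans_eq (by simp)).antisymm ?_
  by_contra! hlt
  obtain ⟨c, hcκ, hc⟩ := lt_lift_iff.1 hlt
  obtain ⟨i, ⟨hi, hXi⟩, hci⟩ := Filter.nonempty_of_mem (Filter.inter_mem hXD (hDμ c hcκ))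
  have := (hUs i hi _ hXi).symm.trans_le (mk_le_mk_of_subset inter_subset_left)
  rw [← hc, lift_le] at this
  exact hci.not_ge this

end Limit

end UltrafilterOn

def IsSuccTailUltrafilter (D : Ultrafilter Ordinal.{u}) (o : Ordinal.{u}) : Prop :=
  ∀ β < o, (· + 1) '' Ico β o ∈ D

theorem exists_isSuccTailUltrafilter {o : Ordinal.{u}} (ho : 0 < o) :
    ∃ D, IsSuccTailUltrafilter D o := by
  have : Nonempty (Iio o) := ⟨⟨0, ho⟩⟩
  refine ⟨.of (Filter.map (fun i : Iio o => i.1 + 1) Filter.atTop), fun β hβ =>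
    Ultrafilter.of_le _ ?_⟩
  refine Filter.mem_map.2 (Filter.mem_of_superset (Filter.mem_atTop ⟨β, hβ⟩) ?_)
  exact fun i (hi : ⟨β, hβ⟩ ≤ i) => ⟨i.1, ⟨hi, i.2⟩, rfl⟩

namespace IsSuccTailUltrafilter

variable {D : Ultrafilter Ordinal.{u}} {o : Ordinal.{u}}

theorem Ici_mem (hD : IsSuccTailUltrafilter D o) {β : Ordinal.{u}} (hβ : β < o) : Ici β ∈ D :=
  Filter.mem_of_superset (hD β hβ) fun _ ⟨_, hi, hx⟩ => hx ▸ hi.1.trans (le_add_right le_rfl)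

theorem Iio_mem (ho : Order.IsSuccLimit o) (hD : IsSuccTailUltrafilter D o) : Iio o ∈ D :=
  Filter.mem_of_superset (hD 0 ho.bot_lt) fun _ ⟨_, hi, hx⟩ => hx ▸ ho.add_one_lt hi.2

theorem exists_add_one_mem (ho : Order.IsSuccLimit o) (hD : IsSuccTailUltrafilter D o)
    {S : Set Ordinal.{u}} (hS : S ∈ D) {β : Ordinal.{u}} (hβ : β < o) :
    ∃ i, β ≤ i ∧ i + 1 < o ∧ i + 1 ∈ S := by
  obtain ⟨_, hxS, i, hi, rfl⟩ := Filter.nonempty_of_mem (Filter.inter_mem hS (hD β hβ))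
  exact ⟨i, hi.1, ho.add_one_lt hi.2, hxS⟩

theorem setOf_lt_mem (ho : Order.IsSuccLimit o) (hD : IsSuccTailUltrafilter D o)
    {κ : Cardinal.{u}} {μ : Ordinal.{u} → Cardinal.{u}}
    (hμ : ∀ i j, i < j → j < o → μ i < μ j) (hμcof : ∀ c < κ, ∃ i < o, c ≤ μ i)
    {c : Cardinal.{u}} (hc : c < κ) : {i | c < μ i} ∈ D := by
  obtain ⟨i₀, hi₀, hci₀⟩ := hμcof c hc
  refine Filter.mem_of_superset (hD i₀ hi₀) ?_
  rintro _ ⟨i, hi, rfl⟩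
  exact hci₀.trans_lt (hμ i₀ (i + 1) (hi.1.trans_lt (lt_add_one i)) (ho.add_one_lt hi.2))

end IsSuccTailUltrafilter

open UltrafilterOn

def blockUnion (o : Ordinal.{u}) (μ : Ordinal.{u} → Cardinal.{u})
    (F : Ordinal.{u} → Set Ordinal.{u}) : Set Ordinal.{u} :=
  {x | ∃ i < o, x ∈ F (i + 1) ∧ (μ i).ord ≤ x}

def scaleBaseSet (As : Ordinal.{u} → Ordinal.{u} → Set Ordinal.{u})
    (g f : Ordinal.{u} → Ordinal.{u} → Ordinal.{u}) (β α : Ordinal.{u}) (S : Set Ordinal.{u}) :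
    Set Ordinal.{u} :=
  {x | ∃ i ∈ S, x ∈ As i (g β i) ∧ f α i ≤ x}

def scaleBase (o : Ordinal.{u}) (D : Ultrafilter Ordinal.{u}) (σ τ : Cardinal.{u})
    (As : Ordinal.{u} → Ordinal.{u} → Set Ordinal.{u})
    (g f : Ordinal.{u} → Ordinal.{u} → Ordinal.{u}) : Set (Set Ordinal.{u}) :=
  (fun p : Ordinal.{u} × Ordinal.{u} × Set Ordinal.{u} => scaleBaseSet As g f p.1 p.2.1 p.2.2) ''
    (Iio τ.ord ×ˢ Iio σ.ord ×ˢ {S | S ∈ D ∧ S ⊆ Iio o})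

section Scales

variable {κ σ τ : Cardinal.{u}} {o : Ordinal.{u}} {μ θ : Ordinal.{u} → Cardinal.{u}}
  {Us : ∀ i, i < o → UltrafilterOn (μ i)} {D : Ultrafilter Ordinal.{u}} {hDIio : Iio o ∈ D}
  {hμκ : ∀ i, i < o → μ i ≤ κ} {As : Ordinal.{u} → Ordinal.{u} → Set Ordinal.{u}}
  {f g : Ordinal.{u} → Ordinal.{u} → Ordinal.{u}}

theorem mk_scaleBase_le (hτ : ℵ₀ ≤ τ) (hστ : σ ≤ τ) (hoτ : 2 ^ o.card ≤ τ) :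
    #(scaleBase o D σ τ As g f) ≤ lift.{u + 1} τ := by
  have hsub : Iio τ.ord ×ˢ Iio σ.ord ×ˢ {S | S ∈ D ∧ S ⊆ Iio o} ⊆
      Iio τ.ord ×ˢ Iio σ.ord ×ˢ 𝒫 Iio o :=
    prod_mono subset_rfl (prod_mono subset_rfl fun _ hS => hS.2)
  have hmul : τ * (σ * 2 ^ o.card) ≤ τ :=
    (mul_le_max _ _).trans (max_le (max_le le_rfl ((mul_le_max _ _).trans
      (max_le (max_le hστ hoτ) hτ))) hτ)
  calc #(scaleBase o D σ τ As g f)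
      ≤ #↥(Iio τ.ord ×ˢ Iio σ.ord ×ˢ 𝒫 Iio o) := mk_image_le.trans (mk_le_mk_of_subset hsub)
    _ = lift.{u + 1} (τ * (σ * 2 ^ o.card)) := by simp [mk_powerset, lift_power]
    _ ≤ lift.{u + 1} τ := lift_le.2 hmul

theorem scaleBaseSet_mem_limit (hUs : ∀ i (hi : i < o), (Us i hi).IsUniform)
    (hAs : ∀ i (hi : i < o), (Us i hi).IsADGenSeq (θ i).ord (As i))
    (hf : IsScale o μ σ f) (hg : IsScale o θ τ g) {β α : Ordinal.{u}} (hβ : β < τ.ord)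
    (hα : α < σ.ord) {S : Set Ordinal.{u}} (hS : S ∈ D) (hSo : S ⊆ Iio o) :
    scaleBaseSet As g f β α S ∈ (limit Us D hDIio hμκ).sets := by
  have hA : ∀ i (hi : i < o), As i (g β i) ∈ (Us i hi).sets := fun i hi =>
    (hAs i hi).1 _ (hg.1 β hβ i hi)
  refine ⟨fun x ⟨i, hi, hx, _⟩ => (Us i (hSo hi)).sets_subset _ (hA i (hSo hi)) hx |>.trans_le
    (ord_le_ord.2 (hμκ i (hSo hi))), Filter.mem_of_superset hS fun i hiS => ⟨hSo hiS, ?_⟩⟩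
  have hi := hSo hiS
  refine (Us i hi).superset_mem _ ((Us i hi).inter_mem _ (hA i hi) _
    ((hUs i hi).diff_Iio_mem (hf.1 α hα i hi))) _ inter_subset_right ?_
  rintro x ⟨hxA, hxμ, hxf⟩
  exact ⟨⟨i, hiS, hxA, not_lt.1 hxf⟩, hxμ⟩

theorem exists_scaleBaseSet_subset (hD : IsSuccTailUltrafilter D o)
    (hAs : ∀ i (hi : i < o), (Us i hi).IsADGenSeq (θ i).ord (As i))
    (hf : IsScale o μ σ f) (hg : IsScale o θ τ g) {X : Set Ordinal.{u}}
    (hX : X ∈ (limit Us D hDIio hμκ).sets) :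
    ∃ β < τ.ord, ∃ α < σ.ord, ∃ S ∈ D, S ⊆ Iio o ∧ scaleBaseSet As g f β α S ⊆ X := by
  have hjex : ∀ i (hi : i < o), ∃ j < (θ i).ord,
      i ∈ traceIndices Us X → AlmostSub (μ i) (As i j) X := fun i hi => by
    by_cases hiX : i ∈ traceIndices Us X
    · obtain ⟨_, ⟨j, hj, rfl⟩, hjX⟩ := (hAs i hi).2.2.2 _ hiX.2
      exact ⟨j, hj, fun _ => hjX.mono_right inter_subset_left⟩
    · exact ⟨0, (hAs i hi).pos, fun h => absurd h hiX⟩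
  choose! j hjθ hj using hjex
  obtain ⟨β, hβ, i₀, hi₀, hjβ⟩ := hg.2.2 j hjθ
  have hmex : ∀ i (hi : i < o), ∃ m < (μ i).ord,
      i ∈ traceIndices Us X → i₀ ≤ i → As i (g β i) \ X ⊆ Iio m := fun i hi => by
    by_cases hiX : i ∈ traceIndices Us X ∧ i₀ ≤ i
    · obtain ⟨b, hb, hsub⟩ := ((hAs i hi).2.1 _ _ (hjβ i hiX.2 hi).le
        (hg.1 β hβ i hi)).trans (hj i hi hiX.1)
      exact ⟨b, hb, fun _ _ => hsub⟩
    · exact ⟨0, (Us i hi).ord_pos, fun h h' => absurd ⟨h, h'⟩ hiX⟩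
  choose! m hmμ hm using hmex
  obtain ⟨α, hα, i₁, hi₁, hmα⟩ := hf.2.2 m hmμ
  refine ⟨β, hβ, α, hα, traceIndices Us X ∩ Ici (max i₀ i₁),
    Filter.inter_mem hX.2 (hD.Ici_mem (max_lt hi₀ hi₁)), fun i hi => hi.1.1, ?_⟩
  rintro x ⟨i, ⟨hiX, hi⟩, hxA, hfx⟩
  by_contra hxX
  have hxm := hm i hiX.1 hiX (le_of_max_le_left hi) ⟨hxA, hxX⟩
  exact hfx.not_gt (hxm.trans (hmα i (le_of_max_le_right hi) hiX.1))

theorem isBase_scaleBase (hD : IsSuccTailUltrafilter D o)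
    (hUs : ∀ i (hi : i < o), (Us i hi).IsUniform)
    (hAs : ∀ i (hi : i < o), (Us i hi).IsADGenSeq (θ i).ord (As i))
    (hf : IsScale o μ σ f) (hg : IsScale o θ τ g) :
    (limit Us D hDIio hμκ).IsBase (scaleBase o D σ τ As g f) := by
  refine ⟨?_, fun X hX => ?_⟩
  · rintro _ ⟨⟨β, α, S⟩, ⟨hβ, hα, hS, hSo⟩, rfl⟩
    exact scaleBaseSet_mem_limit hUs hAs hf hg hβ hα hS hSo
  · obtain ⟨β, hβ, α, hα, S, hS, hSo, hsub⟩ := exists_scaleBaseSet_subset hD hAs hf hg hX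
    exact ⟨_, ⟨(β, α, S), ⟨hβ, hα, hS, hSo⟩, rfl⟩, .of_subset (limit Us D hDIio hμκ).ord_pos hsub⟩

theorem blockUnion_mem_limit {F : Ordinal.{u} → Set Ordinal.{u}} (ho : Order.IsSuccLimit o)
    (hD : IsSuccTailUltrafilter D o) (hμ : ∀ i j, i < j → j < o → μ i < μ j)
    (hUs : ∀ i (hi : i < o), (Us i hi).IsUniform) (hF : ∀ i (hi : i < o), F i ∈ (Us i hi).sets) :
    blockUnion o μ F ∈ (limit Us D hDIio hμκ).sets := by
  refine ⟨fun x ⟨i, hi, hx, _⟩ => ?_, Filter.mem_of_superset (hD 0 ho.bot_lt) ?_⟩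
  · have hi' := ho.add_one_lt hi
    exact (Us _ hi').sets_subset _ (hF _ hi') hx |>.trans_le (ord_le_ord.2 (hμκ _ hi'))
  rintro _ ⟨i, hi, rfl⟩
  have hi' := ho.add_one_lt hi.2
  refine ⟨hi', (Us _ hi').superset_mem _ ((Us _ hi').inter_mem _ (hF _ hi') _
    ((hUs _ hi').diff_Iio_mem (ord_lt_ord.2 (hμ i _ (lt_add_one i) hi')))) _
    inter_subset_right ?_⟩
  rintro x ⟨hxF, hxμ, hxi⟩
  exact ⟨⟨i, hi.2, hxF, not_lt.1 hxi⟩, hxμ⟩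

theorem almostSub_of_diff_blockUnion_subset {F : Ordinal.{u} → Set Ordinal.{u}}
    (hμ : ∀ i j, i < j → j < o → μ i < μ j) (hF : ∀ i, i < o → F i ⊆ Iio (μ i).ord)
    {Y : Set Ordinal.{u}} {γ : Ordinal.{u}} (hYγ : Y \ blockUnion o μ F ⊆ Iio γ)
    {i : Ordinal.{u}} (hi : i + 1 < o) (hγ : γ < (μ (i + 1)).ord) :
    AlmostSub (μ (i + 1)) (Y ∩ Iio (μ (i + 1)).ord) (F (i + 1)) := by
  have hμle : ∀ i j, i ≤ j → j < o → (μ i).ord ≤ (μ j).ord := fun i j hij hj =>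
    ord_le_ord.2 (hij.eq_or_lt.elim (fun h => h ▸ le_rfl) fun h => (hμ i j h hj).le)
  refine ⟨max γ (μ i).ord, max_lt hγ (ord_lt_ord.2 (hμ i _ (lt_add_one i) hi)), ?_⟩
  rintro y ⟨⟨hyY, hyμ : y < _⟩, hyF⟩
  by_contra hy
  rw [mem_Iio, not_lt] at hy
  obtain ⟨i', hi', hyF', hμy⟩ : y ∈ blockUnion o μ F := by
    by_contra hyB
    exact ((le_max_left _ _).trans hy).not_gt (hYγ ⟨hyY, hyB⟩)
  rcases lt_trichotomy i' i with hlt | rfl | hgt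
  · have hio : i < o := (lt_add_one i).trans hi
    have hi'i : i' + 1 ≤ i := Order.add_one_le_iff.2 hlt
    have hyμ' : y < (μ (i' + 1)).ord := hF _ (hi'i.trans_lt hio) hyF'
    exact (hyμ'.trans_le (hμle _ _ hi'i hio)).not_ge ((le_max_right _ _).trans hy)
  · exact hyF hyF'
  · exact (hyμ.trans_le ((hμle _ _ (Order.add_one_le_iff.2 hgt) hi').trans hμy)).false

theorem exists_not_almostSub_of_lt (hUs : ∀ i (hi : i < o), (Us i hi).IsUniform)
    (hAs : ∀ i (hi : i < o), (Us i hi).IsADGenSeq (θ i).ord (As i))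
    (hg : IsScale o θ τ g) (Y : Set Ordinal.{u}) :
    ∃ b < τ.ord, ∀ b', b < b' → b' < τ.ord → ∃ i₀ < o, ∀ i (hi : i < o), i₀ ≤ i → ℵ₀ ≤ μ i →
      Y ∩ Iio (μ i).ord ∈ (Us i hi).sets →
        ¬ AlmostSub (μ i) (Y ∩ Iio (μ i).ord) (As i (g b' i)) := by
  have hjex : ∀ i (hi : i < o), ∃ j < (θ i).ord, ℵ₀ ≤ μ i →
      Y ∩ Iio (μ i).ord ∈ (Us i hi).sets → ¬ AlmostSub (μ i) (Y ∩ Iio (μ i).ord) (As i j) :=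
    fun i hi => by
      by_cases hY : ℵ₀ ≤ μ i ∧ Y ∩ Iio (μ i).ord ∈ (Us i hi).sets
      · obtain ⟨j, hj, hjY⟩ := (hAs i hi).exists_not_almostSub hY.1 (hUs i hi) hY.2
        exact ⟨j, hj, fun _ _ => hjY⟩
      · exact ⟨0, (hAs i hi).pos, fun h₁ h₂ => absurd ⟨h₁, h₂⟩ hY⟩
  choose! j hjθ hj using hjex
  obtain ⟨b, hb, hjb⟩ := hg.2.2 j hjθ
  refine ⟨b, hb, fun b' hbb' hb' => ?_⟩
  obtain ⟨i₀, hi₀, hjb'⟩ := hjb.trans (hg.2.1 b b' hbb' hb')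
  exact ⟨i₀, hi₀, fun i hi hi₀i hμi hYi hYb' => hj i hi hμi hYi
    (hYb'.trans ((hAs i hi).2.1 _ _ (hjb' i hi₀i hi).le (hg.1 b' hb' i hi)))⟩

theorem exists_forall_not_almostSub_limit (ho : Order.IsSuccLimit o)
    (hD : IsSuccTailUltrafilter D o) (hκ : ℵ₀ < κ) (hμ : ∀ i j, i < j → j < o → μ i < μ j)
    (hμcof : ∀ c < κ, ∃ i < o, c ≤ μ i) (hUs : ∀ i (hi : i < o), (Us i hi).IsUniform)
    (hAs : ∀ i (hi : i < o), (Us i hi).IsADGenSeq (θ i).ord (As i))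
    (hτ : τ.IsRegular) (hg : IsScale o θ τ g) {B : Set (Set Ordinal.{u})}
    (hB : B ⊆ (limit Us D hDIio hμκ).sets) (hBτ : #B < lift.{u + 1} τ) :
    ∃ X ∈ (limit Us D hDIio hμκ).sets, ∀ Y ∈ B, ¬ AlmostSub κ Y X := by
  choose b hb hbg using fun Y : B => exists_not_almostSub_of_lt hUs hAs hg Y.1
  obtain ⟨β, hβ, hbβ⟩ := hτ.exists_forall_lt (by rwa [lift_id'.{u, u + 1}]) hb
  refine ⟨blockUnion o μ fun i => As i (g β i), blockUnion_mem_limit ho hD hμ hUs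
    fun i hi => (hAs i hi).1 _ (hg.1 β hβ i hi), fun Y hY ⟨γ, hγ, hYγ⟩ => ?_⟩
  obtain ⟨i₀, hi₀, hesc⟩ := hbg ⟨Y, hY⟩ β (hbβ _) hβ
  obtain ⟨iγ, hiγ, hγi⟩ := hμcof γ.card (lt_ord.1 hγ)
  obtain ⟨iω, hiω, hωi⟩ := hμcof ℵ₀ hκ
  obtain ⟨i, hle, hi, hYi⟩ := hD.exists_add_one_mem ho (hB hY).2 (max_lt (max_lt hi₀ hiγ) hiω)
  have hlt_succ : ∀ {j}, j ≤ max (max i₀ iγ) iω → j < i + 1 := fun h =>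
    h.trans_lt (hle.trans_lt (lt_add_one i))
  refine hesc (i + 1) hYi.1 (hlt_succ (le_max_of_le_left (le_max_left _ _))).le ?_ hYi.2
    (almostSub_of_diff_blockUnion_subset hμ (fun i hi => (Us i hi).sets_subset _
      ((hAs i hi).1 _ (hg.1 β hβ i hi))) hYγ hYi.1 ?_)
  · exact hωi.trans (hμ _ _ (hlt_succ (le_max_right _ _)) hYi.1).le
  · exact lt_ord.2 (hγi.trans_lt (hμ _ _ (hlt_succ (le_max_of_le_left (le_max_right _ _))) hYi.1))

end Scales

theorem statement0_general (κ ρ σ τ : Cardinal.{u})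
    (hκinf : ℵ₀ ≤ κ) (hκcof : κ.ord.cof = ρ)
    (h2ρ : 2 ^ ρ ≤ κ)
    (μ θ : Ordinal.{u} → Cardinal.{u})
    (hμmono : ∀ i j, i < j → j < ρ.ord → μ i < μ j)
    (hμlt : ∀ i, i < ρ.ord → μ i < κ)
    (hμcofinal : ∀ c, c < κ → ∃ i, i < ρ.ord ∧ c ≤ μ i)
    (hUi : ∀ i, i < ρ.ord → ∃ Ui : UltrafilterOn (μ i),
      Ui.IsUniform ∧ Ui.IsComplete ∧ ∃ A, Ui.IsADGenSeq (θ i).ord A)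
    (f g : Ordinal.{u} → Ordinal.{u} → Ordinal.{u})
    (hκσ : κ < σ)
    (hf : IsScale ρ.ord μ σ f)
    (hτreg : τ.IsRegular) (hστ : σ ≤ τ)
    (hg : IsScale ρ.ord θ τ g) :
    ∃ U : UltrafilterOn κ, U.IsUniform ∧ U.char = Cardinal.lift.{u + 1, u} τ := by
  have hρ : ℵ₀ ≤ ρ :=
    hκcof ▸ Ordinal.aleph0_le_cof_iff.2 (Ordinal.one_lt_cof_iff.2 (isSuccLimit_ord hκinf))
  have ho : Order.IsSuccLimit ρ.ord := isSuccLimit_ord hρ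
  have hκ : ℵ₀ < κ := hρ.trans_lt ((cantor ρ).trans_le h2ρ)
  choose Us hUs hA using hUi
  choose! As hAs using fun i hi => (hA i hi).2
  obtain ⟨D, hD⟩ := exists_isSuccTailUltrafilter ho.bot_lt
  let U := limit Us D (hD.Iio_mem ho) fun i hi => (hμlt i hi).le
  refine ⟨U, isUniform_limit hUs fun c hc => hD.setOf_lt_mem ho hμmono hμcofinal hc,
    le_antisymm ?_ (le_char fun B hB hBτ => ?_)⟩
  · refine (char_le (isBase_scaleBase hD hUs hAs hf hg)).trans
      (mk_scaleBase_le hτreg.aleph0_le hστ ?_)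
    rw [card_ord]
    exact h2ρ.trans (hκσ.le.trans hστ)
  · exact exists_forall_not_almostSub_limit ho hD hκ hμmono hμcofinal hUs hAs hτreg hg hB hBτ

/-- Lemma `scalegeneration`.
If `κ` is singular with `cf κ = ρ`, `2^ρ ≤ κ`, `⟨μ i : i < ρ⟩` is increasing and cofinal
in `κ` with each `μ i` carrying a `μ i`-complete uniform ultrafilter with an
almost-decreasing generating sequence of regular length `θ i`, and there are scales
`⟨f α : α < σ⟩` in `∏ μ i` and `⟨g β : β < τ⟩` in `∏ θ i` with `σ, τ` regular,
`κ < σ ≤ τ`, then there is a uniform ultrafilter on `κ` of character `τ`. -/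
theorem statement0 (κ ρ σ τ : Cardinal.{u})
    (hκinf : ℵ₀ ≤ κ) (hκsing : κ.ord.cof < κ) (hκcof : κ.ord.cof = ρ)
    (h2ρ : 2 ^ ρ ≤ κ)
    (μ θ : Ordinal.{u} → Cardinal.{u})
    (hμmono : ∀ i j, i < j → j < ρ.ord → μ i < μ j)
    (hμlt : ∀ i, i < ρ.ord → μ i < κ)
    (hμcofinal : ∀ c, c < κ → ∃ i, i < ρ.ord ∧ c ≤ μ i)
    (hθreg : ∀ i, i < ρ.ord → (θ i).IsRegular)
    (hUi : ∀ i, i < ρ.ord → ∃ Ui : UltrafilterOn (μ i),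
      Ui.IsUniform ∧ Ui.IsComplete ∧ ∃ A, Ui.IsADGenSeq (θ i).ord A)
    (f g : Ordinal.{u} → Ordinal.{u} → Ordinal.{u})
    (hσreg : σ.IsRegular) (hκσ : κ < σ)
    (hf : IsScale ρ.ord μ σ f)
    (hτreg : τ.IsRegular) (hστ : σ ≤ τ)
    (hg : IsScale ρ.ord θ τ g) :
    ∃ U : UltrafilterOn κ, U.IsUniform ∧ U.char = Cardinal.lift.{u + 1, u} τ :=
  statement0_general κ ρ σ τ hκinf hκcof h2ρ μ θ hμmono hμlt hμcofinal hUi f g hκσ hf hτreg hστ hg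
end

section
/- Let κ be a measurable cardinal with 2^κ = κ⁺, and let U be a normal measure on κ. Then U has an almost-decreasing generating sequence of length κ⁺. -/
universe u

open Cardinal Set

/-!
Enumerate `U` as `⟨X η : η < κ⁺⟩`, using `|U| ≤ 2^κ = κ⁺`, and recursively choose `A η ∈ U` with
`A η ⊆ X η` and `A η ⊆* A ξ` for all `ξ < η`. The recursion never gets stuck because, by normality,
any `κ` members `B α` of `U` have a pseudo-intersection in `U`: their diagonal intersection
`Δ_α B α`, which is contained in `B α` above `α`. The resulting `⊆*`-decreasing sequence is a base
since `A η ⊆ X η`.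
-/

theorem exists_surjOn_Iio_of_mk_le {α : Type (u + 1)} [Nonempty α] {o : Ordinal.{u}}
    (h : #α ≤ Cardinal.lift.{u + 1} o.card) :
    ∃ e : Ordinal.{u} → α, Set.SurjOn e (Set.Iio o) Set.univ := by
  rw [← Cardinal.mk_Iio_ordinal] at h
  obtain ⟨i⟩ := h
  have hinj : Function.Injective fun a => (i a : Ordinal.{u}) :=
    fun a b hab => i.injective (Subtype.ext hab)
  exact ⟨Function.invFun fun a => (i a : Ordinal.{u}),
    fun a _ => ⟨i a, (i a).2, Function.leftInverse_invFun hinj a⟩⟩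

namespace AlmostSub

variable {κ : Cardinal.{u}} {A A' B : Set Ordinal.{u}}

theorem of_subset_s7 (hκ : κ ≠ 0) (h : A ⊆ B) : AlmostSub κ A B :=
  ⟨0, Cardinal.ord_pos.2 (pos_iff_ne_zero.2 hκ), by simp [Set.sdiff_eq_empty.2 h]⟩

theorem mono_left (h : A' ⊆ A) (hAB : AlmostSub κ A B) : AlmostSub κ A' B :=
  let ⟨β, hβ, hsub⟩ := hAB
  ⟨β, hβ, fun _ hx => hsub ⟨h hx.1, hx.2⟩⟩

end AlmostSub

def diagInter (κ : Cardinal.{u}) (B : Ordinal.{u} → Set Ordinal.{u}) : Set Ordinal.{u} :=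
  {β | β < κ.ord ∧ ∀ α < β, β ∈ B α}

theorem diagInter_almostSub {κ : Cardinal.{u}} (hκ : ℵ₀ ≤ κ) (B : Ordinal.{u} → Set Ordinal.{u})
    {α : Ordinal.{u}} (hα : α < κ.ord) : AlmostSub κ (diagInter κ B) (B α) := by
  refine ⟨Order.succ α, (Cardinal.isSuccLimit_ord hκ).succ_lt hα, fun β hβ => ?_⟩
  by_contra hαβ
  exact hβ.2 (hβ.1.2 α (Order.succ_le_iff.1 (not_lt.1 hαβ)))

namespace UltrafilterOn

variable {κ : Cardinal.{u}} (U : UltrafilterOn κ)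

theorem nonempty_of_mem {A : Set Ordinal.{u}} (hA : A ∈ U.sets) : A.Nonempty :=
  Set.nonempty_iff_ne_empty.2 fun h => U.empty_not_mem (h ▸ hA)

theorem mk_sets_le : #U.sets ≤ Cardinal.lift.{u + 1} (2 ^ κ) := by
  calc #U.sets ≤ #(𝒫 Set.Iio κ.ord) := Cardinal.mk_le_mk_of_subset U.sets_subset
    _ = Cardinal.lift.{u + 1} (2 ^ κ) := by
      rw [Cardinal.mk_powerset, Cardinal.mk_Iio_ordinal, Cardinal.card_ord, Cardinal.lift_power,
        Cardinal.lift_two]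

variable {U}

theorem IsNormalMeasure.diagInter_mem (hU : U.IsNormalMeasure) {B : Ordinal.{u} → Set Ordinal.{u}}
    (hB : ∀ α < κ.ord, B α ∈ U.sets) : diagInter κ B ∈ U.sets := by
  refine (U.mem_or_compl_mem _ fun β hβ => hβ.1).resolve_right fun hC => ?_
  set C := Set.Iio κ.ord \ diagInter κ B
  have hwitness : ∀ β, ∃ α, β ∈ C → α < β ∧ β ∉ B α := by
    intro β
    by_cases hβ : β ∈ C
    · obtain ⟨α, hαβ, hβα⟩ : ∃ α < β, β ∉ B α := by
        by_contra! h
        exact hβ.2 ⟨hβ.1, h⟩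
      exact ⟨α, fun _ => ⟨hαβ, hβα⟩⟩
    · exact ⟨0, fun h => absurd h hβ⟩
  choose f hf using hwitness
  -- Normality makes the regressive witness function `f` constant, say `c`, on `Y ∩ C`;
  -- then `Y ∩ C ∩ B c` is a member of `U` that is empty.
  obtain ⟨Y, hY, c, hc⟩ := hU.2.2 f ⟨C, hC, fun β hβ => (hf β hβ).1⟩
  have hYC := U.inter_mem Y hY C hC
  obtain ⟨β₀, hβ₀Y, hβ₀C⟩ := U.nonempty_of_mem hYC
  have hcκ : c < κ.ord := hc β₀ hβ₀Y ▸ (hf β₀ hβ₀C).1 |>.trans hβ₀C.1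
  obtain ⟨β, ⟨hβY, hβC⟩, hβB⟩ := U.nonempty_of_mem (U.inter_mem _ hYC _ (hB c hcκ))
  exact (hf β hβC).2 (hc β hβY ▸ hβB)

theorem IsNormalMeasure.exists_almostSub_forall (hU : U.IsNormalMeasure) (hκ : ℵ₀ ≤ κ)
    {η : Ordinal.{u}} (hη : η.card ≤ κ) (A : Ordinal.{u} → Set Ordinal.{u})
    (hA : ∀ ξ < η, A ξ ∈ U.sets) : ∃ D ∈ U.sets, ∀ ξ < η, AlmostSub κ D (A ξ) := by
  rcases eq_or_ne η 0 with rfl | hη0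
  · exact ⟨_, U.univ_mem, fun ξ hξ => (not_lt_zero hξ).elim⟩
  have : Nonempty (Set.Iio η) := ⟨⟨0, pos_iff_ne_zero.2 hη0⟩⟩
  obtain ⟨e, he⟩ := exists_surjOn_Iio_of_mk_le (α := Set.Iio η) (o := κ.ord)
    (by rwa [Cardinal.mk_Iio_ordinal, Cardinal.card_ord, Cardinal.lift_le])
  refine ⟨diagInter κ fun α => A (e α), hU.diagInter_mem fun α _ => hA _ (e α).2, fun ξ hξ => ?_⟩
  obtain ⟨α, hα, hαξ⟩ := he (Set.mem_univ ⟨ξ, hξ⟩)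
  simpa only [hαξ] using diagInter_almostSub hκ (fun α => A (e α)) hα

theorem exists_almostDecreasing_subset {θ : Ordinal.{u}}
    (hpseudo : ∀ η < θ, ∀ A : Ordinal.{u} → Set Ordinal.{u}, (∀ ξ < η, A ξ ∈ U.sets) →
      ∃ D ∈ U.sets, ∀ ξ < η, AlmostSub κ D (A ξ))
    (X : Ordinal.{u} → Set Ordinal.{u}) (hX : ∀ η < θ, X η ∈ U.sets) :
    ∃ A : Ordinal.{u} → Set Ordinal.{u}, ∀ η < θ,
      A η ∈ U.sets ∧ A η ⊆ X η ∧ ∀ ξ < η, AlmostSub κ (A η) (A ξ) := by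
  let A : Ordinal.{u} → Set Ordinal.{u} := Ordinal.lt_wf.fix fun η IH => Classical.epsilon
    fun D => D ∈ U.sets ∧ D ⊆ X η ∧ ∀ ξ (h : ξ < η), AlmostSub κ D (IH ξ h)
  have hA : ∀ η, A η = Classical.epsilon
      fun D => D ∈ U.sets ∧ D ⊆ X η ∧ ∀ ξ < η, AlmostSub κ D (A ξ) :=
    Ordinal.lt_wf.fix_eq _
  refine ⟨A, fun η => ?_⟩
  induction η using WellFoundedLT.induction with
  | ind η IH =>
    intro hη
    obtain ⟨D, hD, hDA⟩ := hpseudo η hη A fun ξ hξ => (IH ξ hξ (hξ.trans hη)).1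
    have hex : ∃ D', D' ∈ U.sets ∧ D' ⊆ X η ∧ ∀ ξ < η, AlmostSub κ D' (A ξ) :=
      ⟨D ∩ X η, U.inter_mem D hD _ (hX η hη), Set.inter_subset_right,
        fun ξ hξ => (hDA ξ hξ).mono_left Set.inter_subset_left⟩
    rw [hA η]
    exact Classical.epsilon_spec hex

end UltrafilterOn

/-- if `κ` is measurable, `2^κ = κ⁺`, and `U` is a normal measure on `κ`,
then `U` has an almost-decreasing generating sequence of length `κ⁺`. -/
theorem statement7 (κ : Cardinal.{u}) (hκ : IsMeasurableCard κ)
    (h2 : 2 ^ κ = Order.succ κ)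
    (U : UltrafilterOn κ) (hU : U.IsNormalMeasure) :
    ∃ A : Ordinal.{u} → Set Ordinal.{u}, U.IsADGenSeq (Order.succ κ).ord A := by
  have hκ₀ : ℵ₀ ≤ κ := hκ.1.le
  have hκne : κ ≠ 0 := ne_zero_of_lt (aleph0_pos.trans_le hκ₀)
  have : Nonempty U.sets := ⟨⟨_, U.univ_mem⟩⟩
  obtain ⟨X, hX⟩ := exists_surjOn_Iio_of_mk_le (o := (Order.succ κ).ord)
    (by simpa only [Cardinal.card_ord, h2] using U.mk_sets_le)
  obtain ⟨A, hA⟩ := U.exists_almostDecreasing_subset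
    (fun η hη => hU.exists_almostSub_forall hκ₀ (Order.lt_succ_iff.1 (Cardinal.lt_ord.1 hη)))
    (fun η => X η) fun η _ => (X η).2
  refine ⟨A, fun η hη => (hA η hη).1, fun ξ η hξη hη => ?_, ?_, fun Y hY => ?_⟩
  · rcases hξη.eq_or_lt with rfl | hlt
    · exact AlmostSub.of_subset_s7 hκne subset_rfl
    · exact (hA η hη).2.2 ξ hlt
  · rintro _ ⟨η, hη, rfl⟩
    exact (hA η hη).1
  · obtain ⟨η, hη, hXη⟩ := hX (Set.mem_univ ⟨Y, hY⟩)
    have hXηY : (X η : Set Ordinal.{u}) = Y := congrArg Subtype.val hXη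
    exact ⟨A η, ⟨η, hη, rfl⟩, AlmostSub.of_subset_s7 hκne (hXηY ▸ (hA η hη).2.1)⟩
end
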